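/- arXiv:1302.2127 — 2 statements merged into one kernel-verified Lean document; each statement's English description precedes it below -/
import Mathlib

section
/- In a graph H whose vertex set is partitioned into 'super-vertices' of cost 0 and 'original' vertices of positive cost, where no two super-vertices are adjacent, any minimum-cost path P (cost of a path = sum of costs of its vertices) between two vertices a, b contains at most 2 original vertices adjacent to any fixed super-vertex R not on P. -/
/-!
If three positive-cost vertices of `P` at positions `i < j < k` were adjacent to `R`, the walk that
follows `P` to position `i`, steps through `R` and rejoins `P` at position `k` is again a path from
`a` to `b` (as `R ∉ P`). It skips the vertex at position `j`, of positive cost, and adds only `R`,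
of cost `0`, so it is strictly cheaper than `P`.
-/

open scoped Classical

open Finset

theorem List.eq_take_append_drop_take_append_drop {α : Type*} (l : List α) {m k : ℕ}
    (hmk : m ≤ k) :
    l = l.take m ++ (l.take k).drop m ++ l.drop k := by
  conv_lhs => rw [← l.take_append_drop k, ← (l.take k).take_append_drop m, List.take_take,
    min_eq_left hmk]

theorem Finset.exists_lt_lt_of_two_lt_card {α : Type*} [LinearOrder α] {s : Finset α}
    (hs : 2 < #s) : ∃ a ∈ s, ∃ b ∈ s, ∃ c ∈ s, a < b ∧ b < c := by
  let e := s.orderEmbOfFin rfl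
  exact ⟨e ⟨0, by omega⟩, s.orderEmbOfFin_mem rfl _, e ⟨1, hs.trans' one_lt_two⟩,
    s.orderEmbOfFin_mem rfl _, e ⟨2, hs⟩, s.orderEmbOfFin_mem rfl _,
    e.strictMono (by simp [Fin.lt_def]), e.strictMono (by simp [Fin.lt_def])⟩

namespace SimpleGraph.Walk

variable {V : Type*} {G : SimpleGraph V} {u v r : V}

def shortcutThrough (p : G.Walk u v) {i k : ℕ} (hi : G.Adj (p.getVert i) r)
    (hk : G.Adj r (p.getVert k)) : G.Walk u v :=
  (p.take i).append (cons hi (cons hk (p.drop k)))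

variable {p : G.Walk u v} {i k : ℕ} (hi : G.Adj (p.getVert i) r) (hk : G.Adj r (p.getVert k))

theorem support_shortcutThrough (hkp : k ≤ p.length) :
    (p.shortcutThrough hi hk).support = p.support.take (i + 1) ++ r :: p.support.drop k := by
  simp [shortcutThrough, support_append, support_take, hkp]

theorem IsPath.shortcutThrough (hp : p.IsPath) (hik : i < k) (hkp : k ≤ p.length)
    (hr : r ∉ p.support) : (p.shortcutThrough hi hk).IsPath := by
  have hsub : (p.support.take (i + 1) ++ p.support.drop k).Sublist p.support := by
    conv_rhs => rw [p.support.eq_take_append_drop_take_append_drop hik]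
    exact (List.sublist_append_left _ _).append (List.Sublist.refl _)
  rw [isPath_def, support_shortcutThrough hi hk hkp, List.nodup_middle, List.nodup_cons]
  exact ⟨fun h => hr (hsub.subset h), hp.support_nodup.sublist hsub⟩

theorem IsPath.sum_support_shortcutThrough [DecidableEq V] {M : Type*} [AddCommMonoid M]
    (hp : p.IsPath) (hik : i < k) (hkp : k ≤ p.length) (hr : r ∉ p.support) (f : V → M) :
    ∑ w ∈ (p.shortcutThrough hi hk).support.toFinset, f w
        + (((p.support.take k).drop (i + 1)).map f).sum
      = f r + ∑ w ∈ p.support.toFinset, f w := by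
  rw [List.sum_toFinset _ (hp.shortcutThrough hi hk hik hkp hr).support_nodup,
    List.sum_toFinset _ hp.support_nodup, support_shortcutThrough hi hk hkp]
  conv_rhs => rw [p.support.eq_take_append_drop_take_append_drop (m := i + 1) hik]
  simp only [List.map_append, List.map_cons, List.sum_append, List.sum_cons]
  abel

theorem getVert_mem_drop_take_support {j : ℕ} (p : G.Walk u v) (hij : i < j) (hjk : j < k)
    (hkp : k ≤ p.length) : p.getVert j ∈ (p.support.take k).drop (i + 1) := by
  rw [getVert_eq_support_getElem _ (by omega), List.mem_iff_getElem]
  refine ⟨j - (i + 1), by simp; omega, ?_⟩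
  simp only [List.getElem_drop, List.getElem_take]
  congr 1
  omega

theorem exists_getVert_mem_lt_lt (p : G.Walk u v) [DecidableEq V] {T : Finset V}
    (hT : T ⊆ p.support.toFinset) (hcard : 2 < #T) :
    ∃ i j k, i < j ∧ j < k ∧ k ≤ p.length ∧
      p.getVert i ∈ T ∧ p.getVert j ∈ T ∧ p.getVert k ∈ T := by
  set I := (range (p.length + 1)).filter (p.getVert · ∈ T)
  have hTI : T ⊆ I.image p.getVert := by
    intro w hw
    obtain ⟨n, rfl, hn⟩ := mem_support_iff_exists_getVert.mp (List.mem_toFinset.mp (hT hw))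
    exact mem_image_of_mem _ (by simp [I, hw]; omega)
  obtain ⟨i, hi, j, hj, k, hk, hij, hjk⟩ :=
    exists_lt_lt_of_two_lt_card (hcard.trans_le ((card_le_card hTI).trans card_image_le))
  simp only [I, mem_filter, mem_range] at hi hj hk
  exact ⟨i, j, k, hij, hjk, by omega, hi.2, hj.2, hk.2⟩

end SimpleGraph.Walk

theorem stmt_16_general {V : Type*} [DecidableEq V] (H : SimpleGraph V)
    (super : V → Prop) (cost : V → ℝ)
    (hcost0 : ∀ w, super w → cost w = 0)
    (hcostpos : ∀ w, ¬ super w → 0 < cost w)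
    (a b : V) (P : H.Walk a b) (hP : P.IsPath)
    (hmin : ∀ Q : H.Walk a b, Q.IsPath →
      ∑ w ∈ P.support.toFinset, cost w ≤ ∑ w ∈ Q.support.toFinset, cost w)
    (R : V) (hRsuper : super R) (hR : R ∉ P.support) :
    (P.support.toFinset.filter (fun w => ¬ super w ∧ H.Adj w R)).card ≤ 2 := by
  by_contra! hcard
  obtain ⟨i, j, k, hij, hjk, hkP, hi, hj, hk⟩ :=
    P.exists_getVert_mem_lt_lt (filter_subset _ _) hcard
  simp only [mem_filter] at hi hj hk
  have hik := hij.trans hjk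
  have hcost_nonneg (w : V) : 0 ≤ cost w := by
    by_cases hw : super w
    · exact (hcost0 w hw).ge
    · exact (hcostpos w hw).le
  have hsaving : cost (P.getVert j) ≤ (((P.support.take k).drop (i + 1)).map cost).sum :=
    List.single_le_sum (List.forall_mem_map.mpr fun w _ => hcost_nonneg w) _
      (List.mem_map_of_mem (P.getVert_mem_drop_take_support hij hjk hkP))
  linarith [hmin _ (hP.shortcutThrough hi.2.2 hk.2.2.symm hik hkP hR),
    hP.sum_support_shortcutThrough hi.2.2 hk.2.2.symm hik hkP hR cost,
    hcostpos _ hj.2.1, hcost0 R hRsuper]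

/-- On a minimum-cost path in a graph whose cost-0 super-vertices form an independent
set (all other vertices having positive cost), at most 2 original (positive-cost)
vertices of the path are adjacent to any fixed super-vertex `R` not on the path. -/
theorem stmt_16 {V : Type*} [DecidableEq V] (H : SimpleGraph V)
    (super : V → Prop) (cost : V → ℝ)
    (hcost0 : ∀ w, super w → cost w = 0)
    (hcostpos : ∀ w, ¬ super w → 0 < cost w)
    (hnosuper : ∀ u w, super u → super w → ¬ H.Adj u w)
    (a b : V) (P : H.Walk a b) (hP : P.IsPath)
    (hmin : ∀ Q : H.Walk a b, Q.IsPath →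
      ∑ w ∈ P.support.toFinset, cost w ≤ ∑ w ∈ Q.support.toFinset, cost w)
    (R : V) (hRsuper : super R) (hR : R ∉ P.support) :
    (P.support.toFinset.filter (fun w => ¬ super w ∧ H.Adj w R)).card ≤ 2 :=
  stmt_16_general H super cost hcost0 hcostpos a b P hP hmin R hRsuper hR
end

section
/- Let T be a tree output in the last phase of the algorithm, and z the dual solution of the last phase, in which every moat in the support of z became inactive (∑_{U⊆S} z_U = π̄(S) holds for each maximal inactive set S) and every such set is disjoint from T. Then π̄(V' \ T) ≤ ∑_{S} z_S, provided the maximal inactive sets cover all vertices of V' \ T with positive reduced penalty. -/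
open scoped Classical

/-- The dual of the last phase pays for the penalties: if the maximal inactive sets
are pairwise disjoint subsets of `V' = V \ {r}` disjoint from `T`, each tight
(`∑_{U ⊆ S} z_U = π̄(S)`), and they cover every vertex outside `T` with positive
reduced penalty, then `π̄(V' \ T) ≤ ∑_S z_S`. -/
theorem stmt_18 {V : Type*} [Fintype V] [DecidableEq V] (r : V)
    (πr : V → ℝ) (hπ : ∀ v, 0 ≤ πr v)
    (z : Finset V → ℝ) (hz : ∀ S, 0 ≤ z S) (hz0 : z ∅ = 0)
    (T : Finset V) (ℐ : Finset (Finset V))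
    (hsub : ∀ S ∈ ℐ, S ⊆ Finset.univ.erase r)
    (hdisj : ∀ S ∈ ℐ, ∀ S' ∈ ℐ, S ≠ S' → Disjoint S S')
    (hdisjT : ∀ S ∈ ℐ, Disjoint S T)
    (htight : ∀ S ∈ ℐ, ∑ U ∈ S.powerset, z U = ∑ v ∈ S, πr v)
    (hcover : ∀ v, v ≠ r → v ∉ T → 0 < πr v → ∃ S ∈ ℐ, v ∈ S) :
    ∑ v ∈ (Finset.univ.erase r) \ T, πr v ≤
      ∑ S ∈ (Finset.univ.erase r).powerset, z S := by
  classical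
  set V' := Finset.univ.erase r with hV'
  set B : Finset V := ℐ.biUnion id with hB
  have hBsub : B ⊆ V' \ T := by
    intro v hv
    rcases Finset.mem_biUnion.1 hv with ⟨S, hS, hvS⟩
    exact Finset.mem_sdiff.2 ⟨hsub S hS hvS,
      fun hvT => Finset.disjoint_left.1 (hdisjT S hS) hvS hvT⟩
  have hpairs : (↑ℐ : Set (Finset V)).PairwiseDisjoint (id : Finset V → Finset V) :=
    fun S hS S' hS' hne => hdisj S hS S' hS' hne
  have h1 : ∑ v ∈ V' \ T, πr v = ∑ S ∈ ℐ, ∑ v ∈ S, πr v := by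
    have hb : ∑ v ∈ B, πr v = ∑ S ∈ ℐ, ∑ v ∈ S, πr v := Finset.sum_biUnion hpairs
    rw [← hb]
    refine (Finset.sum_subset hBsub ?_).symm
    intro v hv hvB
    by_contra hne
    have hpos : 0 < πr v := lt_of_le_of_ne (hπ v) (Ne.symm hne)
    have hvV := Finset.mem_sdiff.1 hv
    rcases hcover v (Finset.ne_of_mem_erase hvV.1) hvV.2 hpos with ⟨S, hS, hvS⟩
    exact hvB (Finset.mem_biUnion.2 ⟨S, hS, hvS⟩)
  have h2 : ∀ S ∈ ℐ, ∑ v ∈ S, πr v = ∑ U ∈ S.powerset.erase ∅, z U := by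
    intro S hS
    rw [← htight S hS]
    rw [← Finset.sum_erase_add _ _ (Finset.empty_mem_powerset S), hz0, add_zero]
  have hpairs2 : (↑ℐ : Set (Finset V)).PairwiseDisjoint
      (fun S => S.powerset.erase ∅) := by
    intro S hS S' hS' hne
    apply Finset.disjoint_left.2
    intro U hU hU'
    have hU1 := Finset.mem_erase.1 hU
    have hU2 := Finset.mem_erase.1 hU'
    rcases Finset.nonempty_iff_ne_empty.2 hU1.1 with ⟨v, hv⟩
    exact Finset.disjoint_left.1 (hdisj S hS S' hS' hne)
      (Finset.mem_powerset.1 hU1.2 hv) (Finset.mem_powerset.1 hU2.2 hv)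
  calc ∑ v ∈ V' \ T, πr v = ∑ S ∈ ℐ, ∑ U ∈ S.powerset.erase ∅, z U := by
        rw [h1]; exact Finset.sum_congr rfl h2
    _ = ∑ U ∈ ℐ.biUnion (fun S => S.powerset.erase ∅), z U :=
        (Finset.sum_biUnion hpairs2).symm
    _ ≤ ∑ S ∈ V'.powerset, z S := by
        refine Finset.sum_le_sum_of_subset_of_nonneg ?_ (fun S _ _ => hz S)
        intro U hU
        rcases Finset.mem_biUnion.1 hU with ⟨S, hS, hUS⟩
        exact Finset.mem_powerset.2 ((Finset.mem_powerset.1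
          (Finset.mem_erase.1 hUS).2).trans (hsub S hS))
end
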